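/- Let D be a defeasible theory and ⟨T_{D,WF}, F_{D,WF}⟩ the well-founded model of D under NDL. For every ordinal λ ≥ 0 and every literal p ∈ Lit(D): (1) if p ∈ X_D↑λ then p ∈ T_{D,WF}, and (2) if p ∉ β_D(X_D↑λ) then p ∈ F_{D,WF}. -/

import Mathlib

namespace DLWFS

universe u

/-- Ground literals over a type `A` of atoms: atoms and their classical complements. -/
inductive Lit (A : Type u) : Type u where
  | pos : A → Lit A
  | neg : A → Lit A

/-- The classical complement `p̄` of a literal `p`. -/
def Lit.compl {A : Type u} : Lit A → Lit A
  | .pos a => .neg a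
  | .neg a => .pos a

/-- The three kinds of rules of a defeasible theory. -/
inductive RuleKind : Type where
  | strict
  | defeasible
  | defeater
deriving DecidableEq

/-- A rule of a defeasible theory: a kind, a body (a set of literals) and a head literal. -/
structure DRule (A : Type u) where
  kind : RuleKind
  body : Set (Lit A)
  head : Lit A

/-- A defeasible theory `D = ⟨R, C, ≺⟩`. -/
structure DTheory (A : Type u) where
  rules : Set (DRule A)
  conflicts : Set (Set (Lit A))
  prec : DRule A → DRule A → Prop

namespace DTheory

variable {A : Type u}

/-- The strict rules `R_s`. -/
def Rs (D : DTheory A) : Set (DRule A) := {r ∈ D.rules | r.kind = RuleKind.strict}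

/-- The defeasible rules `R_d`. -/
def Rd (D : DTheory A) : Set (DRule A) := {r ∈ D.rules | r.kind = RuleKind.defeasible}

/-- The defeater rules `R_u`. -/
def Ru (D : DTheory A) : Set (DRule A) := {r ∈ D.rules | r.kind = RuleKind.defeater}

/-- `C[p]`: the conflict sets containing literal `p`. -/
def Cset (D : DTheory A) (p : Lit A) : Set (Set (Lit A)) := {c ∈ D.conflicts | p ∈ c}

/-- Structural conditions in the definition of a defeasible theory: a countable set of
rules with finite bodies, a countable set of finite conflict sets containing every
minimal conflict set `{p, ¬p}`, and an acyclic priority relation over non-strict rules. -/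
def WellFormed (D : DTheory A) : Prop :=
  D.rules.Countable ∧ D.conflicts.Countable ∧
  (∀ r ∈ D.rules, r.body.Finite) ∧
  (∀ c ∈ D.conflicts, c.Finite) ∧
  (∀ p : A, ({Lit.pos p, Lit.neg p} : Set (Lit A)) ∈ D.conflicts) ∧
  (∀ r s, D.prec r s → r.kind ≠ RuleKind.strict ∧ s.kind ≠ RuleKind.strict) ∧
  (∀ r, ¬ Relation.TransGen D.prec r r)

/-- `C = C_MIN`: the conflict sets are exactly the minimal ones `{p, ¬p}`. -/
def MinimalConflicts (D : DTheory A) : Prop :=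
  D.conflicts = {c | ∃ p : A, c = ({Lit.pos p, Lit.neg p} : Set (Lit A))}

end DTheory

/-- A 3-valued interpretation: a pair `⟨T, F⟩` of sets. -/
abbrev Interp (L : Type u) : Type u := Set L × Set L

variable {A : Type u}

/-- `S` is ADL-unfounded with respect to theory `D` and interpretation `I = ⟨T, F⟩`. -/
def ADLUnfounded (D : DTheory A) (I : Interp (Lit A)) (S : Set (Lit A)) : Prop :=
  ∀ p ∈ S,
    (∀ r ∈ D.Rs, r.head = p → (r.body ∩ (I.2 ∪ S)).Nonempty) ∧
    (∀ r ∈ D.Rd, r.head = p →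
      (r.body ∩ (I.2 ∪ S)).Nonempty ∨
      ∃ c ∈ D.conflicts, p ∈ c ∧
        ∀ q ∈ c \ {p}, ∃ s ∈ D.rules, s.head = q ∧ s.body ⊆ I.1 ∧
          (D.prec r s ∨ s.kind = RuleKind.strict))

/-- `S` is NDL-unfounded with respect to theory `D` and interpretation `I = ⟨T, F⟩`. -/
def NDLUnfounded (D : DTheory A) (I : Interp (Lit A)) (S : Set (Lit A)) : Prop :=
  ∀ p ∈ S,
    (∀ r ∈ D.Rs, r.head = p → (r.body ∩ (I.2 ∪ S)).Nonempty) ∧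
    (∀ r ∈ D.Rd, r.head = p →
      (r.body ∩ (I.2 ∪ S)).Nonempty ∨
      ∃ c ∈ D.conflicts, p ∈ c ∧
        ∀ q ∈ c \ {p}, ∃ s ∈ D.rules, s.head = q ∧ s.body ⊆ I.1 ∧
          ¬ D.prec s r)

/-- `U_D(I)` for ADL: the union of all ADL-unfounded sets. -/
def UA (D : DTheory A) (I : Interp (Lit A)) : Set (Lit A) :=
  ⋃₀ {S | ADLUnfounded D I S}

/-- `U_D(I)` for NDL: the union of all NDL-unfounded sets. -/
def UN (D : DTheory A) (I : Interp (Lit A)) : Set (Lit A) :=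
  ⋃₀ {S | NDLUnfounded D I S}

/-- `T_D(I)`: the literals having a witness of provability with respect to `I = ⟨T, F⟩`. -/
def TD (D : DTheory A) (I : Interp (Lit A)) : Set (Lit A) :=
  {p | ∃ r ∈ D.rules, r.head = p ∧ r.body ⊆ I.1 ∧
    (r.kind = RuleKind.strict ∨
      (r.kind = RuleKind.defeasible ∧
        ∀ c ∈ D.conflicts, p ∈ c →
          ∃ q ∈ c \ {p}, ∀ s ∈ D.rules, s.head = q →
            (D.prec s r ∨ (s.body ∩ I.2).Nonempty)))}

/-- `W_D` for ADL. -/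
def WA (D : DTheory A) (I : Interp (Lit A)) : Interp (Lit A) := (TD D I, UA D I)

/-- `W_D` for NDL. -/
def WN (D : DTheory A) (I : Interp (Lit A)) : Interp (Lit A) := (TD D I, UN D I)

/-- `I` is the well-founded model for the operator `W`: the least fixpoint of `W`
(componentwise order). -/
def IsWFModel {L : Type u} (W : Interp L → Interp L) (I : Interp L) : Prop :=
  W I = I ∧ ∀ J, W J = J → I.1 ⊆ J.1 ∧ I.2 ⊆ J.2

/-- A rule of a normal logic program: `head ← pos, ∼neg`. -/
structure NRule (A : Type u) where
  head : A
  pos : Set A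
  neg : Set A

/-- A normal logic program: a set of rules. -/
abbrev NProgram (A : Type u) : Type u := Set (NRule A)

/-- Structural conditions in the definition of a normal logic program: a countable
set of ground rules with finite bodies. -/
def NProgram.WellFormed (P : NProgram A) : Prop :=
  P.Countable ∧ ∀ r ∈ P, r.pos.Finite ∧ r.neg.Finite

/-- The immediate consequence operator `T_Π` on 3-valued interpretations. -/
def TP (P : NProgram A) (I : Interp A) : Set A :=
  {a | ∃ r ∈ P, r.head = a ∧ r.pos ⊆ I.1 ∧ r.neg ⊆ I.2}

/-- `S` is an unfounded set of program `P` with respect to interpretation `I = ⟨T, F⟩`. -/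
def PUnfounded (P : NProgram A) (I : Interp A) (S : Set A) : Prop :=
  ∀ p ∈ S, ∀ r ∈ P, r.head = p →
    (r.pos ∩ (I.2 ∪ S)).Nonempty ∨ (r.neg ∩ I.1).Nonempty

/-- `U_Π(I)`: the greatest unfounded set (union of all unfounded sets). -/
def UP (P : NProgram A) (I : Interp A) : Set A :=
  ⋃₀ {S | PUnfounded P I S}

/-- `W_Π(I) = ⟨T_Π(I), U_Π(I)⟩`. -/
def WP (P : NProgram A) (I : Interp A) : Interp A := (TP P I, UP P I)

/-- Transfinite iteration of an operator `W` from `⊥`, taking suprema at limit ordinals. -/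
noncomputable def iterW {α : Type*} [CompleteLattice α] (W : α → α) : Ordinal.{0} → α :=
  fun o =>
    Ordinal.limitRecOn (motive := fun _ => α) o ⊥ (fun _ ih => W ih)
      (fun o' _ ih => ⨆ x : Set.Iio o', ih x.1 x.2)

/-- One step of the immediate consequence operator for a set of defeasible-theory rules. -/
def TRstep (R : Set (DRule A)) (S : Set (Lit A)) : Set (Lit A) :=
  {p | ∃ r ∈ R, r.head = p ∧ r.body ⊆ S}

/-- The finite iterates `T_R ↑ n`. -/
def TRiter (R : Set (DRule A)) : ℕ → Set (Lit A)
  | 0 => ∅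
  | n + 1 => TRstep R (TRiter R n)

/-- `Cl(R) = T_R ↑ ω`. -/
def ClR (R : Set (DRule A)) : Set (Lit A) := ⋃ n, TRiter R n

/-- The `α`-reduct `D_α^S` of a defeasible theory. -/
def alphaReduct (D : DTheory A) (S : Set (Lit A)) : Set (DRule A) :=
  D.Rs ∪ {r ∈ D.Rd | ∀ c ∈ D.conflicts, r.head ∈ c → ∃ q ∈ c \ {r.head}, q ∉ S}

/-- The ambiguity-propagating operator `α_D(S) = Cl(D_α^S)`. -/
def alphaOp (D : DTheory A) (S : Set (Lit A)) : Set (Lit A) := ClR (alphaReduct D S)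

/-- The `β`-reduct `D_β^S` of a defeasible theory. -/
def betaReduct (D : DTheory A) (S : Set (Lit A)) : Set (DRule A) :=
  D.Rs ∪ {r ∈ D.Rd | ∀ c ∈ D.conflicts, r.head ∈ c →
    ∃ q ∈ c \ {r.head}, ∀ s ∈ D.rules, s.head = q → (¬ s.body ⊆ S ∨ D.prec s r)}

/-- The ambiguity-blocking operator `β_D(S) = Cl(D_β^S)`. -/
def betaOp (D : DTheory A) (S : Set (Lit A)) : Set (Lit A) := ClR (betaReduct D S)

/-- `S` is an `α`-stable set of `D`. -/
def AlphaStable (D : DTheory A) (S : Set (Lit A)) : Prop := alphaOp D S = S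

/-- `S` is a `β`-stable set of `D`. -/
def BetaStable (D : DTheory A) (S : Set (Lit A)) : Prop := betaOp D S = S

/-- The sequence `X_D↑λ`: `X↑0 = ∅`, `X↑(λ+1) = β_D(β_D(X↑λ))`, unions at limits. -/
noncomputable def Xseq (D : DTheory A) : Ordinal.{0} → Set (Lit A) :=
  iterW (fun S => betaOp D (betaOp D S))

/-- The Gelfond–Lifschitz reduct `Π^S`. -/
def glReduct (P : NProgram A) (S : Set A) : NProgram A :=
  {r' | ∃ r ∈ P, r.neg ∩ S = ∅ ∧ r' = NRule.mk r.head r.pos ∅}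

/-- One step of the immediate consequence operator for a NAF-free program. -/
def TPstep (P : NProgram A) (S : Set A) : Set A :=
  {a | ∃ r ∈ P, r.head = a ∧ r.pos ⊆ S}

/-- The finite iterates `T_Π ↑ n` of a NAF-free program. -/
def TPiter (P : NProgram A) : ℕ → Set A
  | 0 => ∅
  | n + 1 => TPstep P (TPiter P n)

/-- `Cl(Π) = T_Π ↑ ω`. -/
def ClP (P : NProgram A) : Set A := ⋃ n, TPiter P n

/-- The Gelfond–Lifschitz operator `γ_Π(S) = Cl(Π^S)`. -/
def gamma (P : NProgram A) (S : Set A) : Set A := ClP (glReduct P S)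

/-- `S` is a stable model of `P`. -/
def StableModel (P : NProgram A) (S : Set A) : Prop := gamma P S = S

/-- `Prod(C[p])`: all sets obtained by choosing one literal other than `p` from each
conflict set containing `p`. -/
def ProdC (D : DTheory A) (p : Lit A) : Set (Set (Lit A)) :=
  {Q | ∃ f : Set (Lit A) → Lit A,
    (∀ c ∈ D.conflicts, p ∈ c → f c ∈ c \ {p}) ∧
    Q = f '' {c ∈ D.conflicts | p ∈ c}}

/-- The logic program translation `Π_D` of a defeasible theory `D` (negative literals
are treated as fresh atoms, so the atoms of the program are the literals of `D`). -/
def lpTrans (D : DTheory A) : NProgram (Lit A) :=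
  {r' | ∃ r ∈ D.Rs, r' = NRule.mk r.head r.body ∅} ∪
  {r' | ∃ r ∈ D.Rd, ∃ Q ∈ ProdC D r.head, r' = NRule.mk r.head r.body Q}

/-- The explicit version `Φ` of a normal program `Π`: atoms of `Φ` are the literals
over the atoms of `Π` (`¬p` being a fresh atom). -/
def explicitVer (P : NProgram A) : NProgram (Lit A) :=
  {r' | ∃ r ∈ P, r' = NRule.mk (Lit.pos r.head) (Lit.pos '' r.pos ∪ Lit.neg '' r.neg) ∅} ∪
  {r' | ∃ p : A, r' = NRule.mk (Lit.neg p) ∅ {Lit.pos p}}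

/-- The minimal conflict sets over atom type `A`. -/
def CMin (A : Type u) : Set (Set (Lit A)) :=
  {c | ∃ p : A, c = ({Lit.pos p, Lit.neg p} : Set (Lit A))}

/-- The defeasible theory translation `D_Π` of a normal program `Π`: each program rule
becomes a strict rule (default literals `∼b` becoming negative literals `¬b`), and each
atom `p` yields a presumption `∅ ⇒ ¬p`; conflict sets are minimal and `≺` is empty. -/
def dtTrans (P : NProgram A) : DTheory A :=
  { rules :=
      {e | ∃ r ∈ P, e = DRule.mk RuleKind.strict
            (Lit.pos '' r.pos ∪ Lit.neg '' r.neg) (Lit.pos r.head)} ∪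
      {e | ∃ p : A, e = DRule.mk RuleKind.defeasible ∅ (Lit.neg p)}
    conflicts := CMin A
    prec := fun _ _ => False }

/-- `M^¬ = M ∪ {¬p : p ∉ M}`, atoms being identified with positive literals. -/
def negCompl (M : Set A) : Set (Lit A) :=
  Lit.pos '' M ∪ Lit.neg '' {p | p ∉ M}

end DLWFS

/-!
Every literal of `X_D↑λ` is true in the well-founded model `I = ⟨T, F⟩`, by transfinite
induction. The step rests on two observations about a fixpoint of `W_D`. If `S ⊆ T`, the
complement of `β_D(S)` is NDL-unfounded wrt `I`: a rule whose head lies outside the closed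
set `β_D(S)` either has a body literal outside it or was removed from the reduct, and a
removed defeasible rule is overridden by a rule whose body lies in `S ⊆ T`. Dually, if the
complement of `S'` is false in `I`, every rule of `D_β^{S'}` with true body is a witness of
provability, so `β_D(S') ⊆ T`. Applying both with `S' = β_D(S)` gives `β_D(β_D(S)) ⊆ T`.
-/

namespace DLWFS

section

variable {A : Type*}

theorem iterW_le_of_forall_le {α : Type*} [CompleteLattice α] {W : α → α} {a : α}
    (hW : ∀ x ≤ a, W x ≤ a) (o : Ordinal.{0}) : iterW W o ≤ a := by
  induction o using Ordinal.limitRecOn with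
  | zero => simp [iterW, Ordinal.limitRecOn_zero]
  | add_one o ih =>
    rw [iterW, Ordinal.limitRecOn_add_one]
    exact hW _ ih
  | limit o ho ih =>
    rw [iterW, Ordinal.limitRecOn_limit _ _ _ _ ho]
    exact iSup_le fun x => ih x.1 x.2

section Closure

variable {R : Set (DRule A)}

theorem TRstep_mono : Monotone (TRstep R) :=
  fun _ _ h _ ⟨r, hr, hhead, hbody⟩ => ⟨r, hr, hhead, hbody.trans h⟩

theorem TRiter_mono : Monotone (TRiter R) := by
  refine monotone_nat_of_le_succ fun n => ?_
  induction n with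
  | zero => exact Set.empty_subset _
  | succ n ih => exact TRstep_mono ih

theorem TRstep_ClR_subset (hfin : ∀ r ∈ R, r.body.Finite) : TRstep R (ClR R) ⊆ ClR R := by
  rintro p ⟨r, hr, rfl, hbody⟩
  obtain ⟨n, hn⟩ := TRiter_mono.directed_le.exists_mem_subset_of_finset_subset_biUnion
    (s := (hfin r hr).toFinset) (by simpa [ClR] using hbody)
  exact Set.mem_iUnion.mpr ⟨n + 1, r, hr, rfl, by simpa using hn⟩

theorem ClR_subset_of_TRstep_subset {X : Set (Lit A)} (hX : TRstep R X ⊆ X) : ClR R ⊆ X := by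
  refine Set.iUnion_subset fun n => ?_
  induction n with
  | zero => exact Set.empty_subset _
  | succ n ih => exact (TRstep_mono ih).trans hX

end Closure

theorem betaReduct_subset_rules (D : DTheory A) (S : Set (Lit A)) :
    betaReduct D S ⊆ D.rules := by
  rintro r (hr | hr)
  · exact hr.1
  · exact hr.1.1

theorem NDLUnfounded_compl_betaOp {D : DTheory A} (hfin : ∀ r ∈ D.rules, r.body.Finite)
    {I : Interp (Lit A)} {S : Set (Lit A)} (hS : S ⊆ I.1) :
    NDLUnfounded D I (betaOp D S)ᶜ := by
  have hclosed : TRstep (betaReduct D S) (betaOp D S) ⊆ betaOp D S :=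
    TRstep_ClR_subset fun r hr => hfin r (betaReduct_subset_rules D S hr)
  have body_meets : ∀ r ∈ D.rules, r.head ∉ betaOp D S → r ∉ betaReduct D S ∨
      (r.body ∩ (I.2 ∪ (betaOp D S)ᶜ)).Nonempty := by
    intro r _ hhead
    by_contra! h
    refine hhead (hclosed ⟨r, h.1, rfl, fun x hx => ?_⟩)
    by_contra hx'
    exact Set.eq_empty_iff_forall_notMem.mp h.2 x ⟨hx, Or.inr hx'⟩
  intro p hp
  constructor
  · rintro r hr rfl
    exact (body_meets r hr.1 hp).resolve_left fun h => h (Or.inl hr)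
  · rintro r hr rfl
    refine (body_meets r hr.1 hp).symm.imp_right fun hnot => ?_
    have hoverridden : ¬ ∀ c ∈ D.conflicts, r.head ∈ c → ∃ q ∈ c \ {r.head},
        ∀ s ∈ D.rules, s.head = q → (¬ s.body ⊆ S ∨ D.prec s r) :=
      fun h => hnot (Or.inr ⟨hr, h⟩)
    push Not at hoverridden
    obtain ⟨c, hc, hpc, hq⟩ := hoverridden
    refine ⟨c, hc, hpc, fun q hqc => ?_⟩
    obtain ⟨s, hs, hhead, hbody, hprec⟩ := hq q hqc
    exact ⟨s, hs, hhead, hbody.trans hS, hprec⟩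

theorem compl_betaOp_subset_of_subset {D : DTheory A} (hfin : ∀ r ∈ D.rules, r.body.Finite)
    {I : Interp (Lit A)} (hI : WN D I = I) {S : Set (Lit A)} (hS : S ⊆ I.1) :
    (betaOp D S)ᶜ ⊆ I.2 := by
  rw [← congrArg Prod.snd hI]
  exact Set.subset_sUnion_of_mem (NDLUnfounded_compl_betaOp hfin hS)

theorem TRstep_betaReduct_subset_TD {D : DTheory A} {I : Interp (Lit A)} {S : Set (Lit A)}
    (hS : Sᶜ ⊆ I.2) : TRstep (betaReduct D S) I.1 ⊆ TD D I := by
  rintro p ⟨r, hr, rfl, hbody⟩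
  rcases hr with hstrict | ⟨hdef, hcond⟩
  · exact ⟨r, hstrict.1, rfl, hbody, Or.inl hstrict.2⟩
  refine ⟨r, hdef.1, rfl, hbody, Or.inr ⟨hdef.2, fun c hc hpc => ?_⟩⟩
  obtain ⟨q, hq, hdefeated⟩ := hcond c hc hpc
  refine ⟨q, hq, fun s hs hhead => (hdefeated s hs hhead).symm.imp_right fun hnot => ?_⟩
  obtain ⟨x, hx, hxS⟩ := Set.not_subset.mp hnot
  exact ⟨x, hx, hS hxS⟩

theorem betaOp_subset_of_compl_subset {D : DTheory A} {I : Interp (Lit A)} (hI : WN D I = I)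
    {S : Set (Lit A)} (hS : Sᶜ ⊆ I.2) : betaOp D S ⊆ I.1 := by
  refine ClR_subset_of_TRstep_subset ?_
  conv_rhs => rw [← congrArg Prod.fst hI]
  exact TRstep_betaReduct_subset_TD hS

end

/-- Let `D` be a defeasible theory and `⟨T_WF, F_WF⟩` its well-founded model under NDL.
For every ordinal `λ` and literal `p`: if `p ∈ X_D↑λ` then `p ∈ T_WF`, and if
`p ∉ β_D(X_D↑λ)` then `p ∈ F_WF`. -/
theorem beta_iteration_sound {A : Type*} (D : DTheory A) (hwf : D.WellFormed)
    (I : Interp (Lit A)) (hI : IsWFModel (WN D) I) :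
    ∀ (lam : Ordinal) (p : Lit A),
      (p ∈ Xseq D lam → p ∈ I.1) ∧ (p ∉ betaOp D (Xseq D lam) → p ∈ I.2) := by
  have hfin := hwf.2.2.1
  have hX : ∀ lam, Xseq D lam ⊆ I.1 := iterW_le_of_forall_le fun S hS =>
    betaOp_subset_of_compl_subset hI.1 (compl_betaOp_subset_of_subset hfin hI.1 hS)
  exact fun lam p =>
    ⟨fun hp => hX lam hp, fun hp => compl_betaOp_subset_of_subset hfin hI.1 (hX lam) hp⟩

end DLWFS
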